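/- The graph T_n^1(3,3) on n ≥ 7 vertices (two triangles joined by a bridge v₃w₁, with k = n−6 ≥ 1 pendant edges attached to v₃) has exactly 6 maximal matchings of size 2 and exactly 3k+1 maximal matchings of size 3, and no others; hence avm(T_n^1(3,3)) = (9n−39)/(3n−11) = 3 − 6/(3n−11). -/

import Mathlib

open scoped Classical

/-- `M` is a matching of `G`, viewed as a finite set of edges. -/
def IsMatchingSet {V : Type*} (G : SimpleGraph V) (M : Finset (Sym2 V)) : Prop :=
  (M : Set (Sym2 V)) ⊆ G.edgeSet ∧
    (M : Set (Sym2 V)).Pairwise fun e f => ∀ v : V, ¬(v ∈ e ∧ v ∈ f)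

/-- `M` is a maximal matching of `G`. -/
def IsMaximalMatching {V : Type*} (G : SimpleGraph V) (M : Finset (Sym2 V)) : Prop :=
  IsMatchingSet G M ∧ ∀ N : Finset (Sym2 V), IsMatchingSet G N → M ⊆ N → N = M

/-- The finite set of all maximal matchings of a finite graph. -/
noncomputable def maximalMatchings {V : Type*} [Fintype V] [DecidableEq V]
    (G : SimpleGraph V) : Finset (Finset (Sym2 V)) :=
  G.edgeFinset.powerset.filter fun M => IsMaximalMatching G M

/-- The average size of a maximal matching of `G`. -/
noncomputable def avm {V : Type*} [Fintype V] [DecidableEq V] (G : SimpleGraph V) : ℚ :=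
  (∑ M ∈ maximalMatchings G, (M.card : ℚ)) / ((maximalMatchings G).card : ℚ)

/-- `T_n^1(3,3)`: two triangles `{0,1,2}` and `{3,4,5}` joined by the bridge
`2–3` (so `0 = v₁`, `1 = v₂`, `2 = v₃`, `3 = w₁`, `4 = w₂`, `5 = w₃`), and every
vertex `i` with `6 ≤ i` is a leaf attached to `v₃`. -/
def T33 (n : ℕ) : SimpleGraph (Fin n) :=
  SimpleGraph.fromRel fun x y =>
    ((x : ℕ) = 0 ∧ (y : ℕ) = 1) ∨ ((x : ℕ) = 0 ∧ (y : ℕ) = 2) ∨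
    ((x : ℕ) = 1 ∧ (y : ℕ) = 2) ∨ ((x : ℕ) = 2 ∧ (y : ℕ) = 3) ∨
    ((x : ℕ) = 3 ∧ (y : ℕ) = 4) ∨ ((x : ℕ) = 3 ∧ (y : ℕ) = 5) ∨
    ((x : ℕ) = 4 ∧ (y : ℕ) = 5) ∨ ((x : ℕ) = 2 ∧ 6 ≤ (y : ℕ))

/-!
A maximal matching of `T_n^1(3,3)` covers `v₃`, since it must meet a pendant edge, and it contains
an edge `t` of the triangle `w₁w₂w₃`, since it must meet `w₂w₃`. Every other edge of the graph
either contains `v₃` or is `v₁v₂`, so the matching is determined by the partner `x` of `v₃` and by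
`t` (which avoids `x`): it is `{v₃x, t}` if `x ∈ {v₁, v₂}` and `{v₃x, v₁v₂, t}` otherwise.
Conversely each such pair gives a maximal matching. This yields `2 · 3` matchings of size 2, and
`3k` (with `x` a leaf) plus one (with `x = w₁`, `t = w₂w₃`) of size 3.
-/

section Matching

variable {V : Type*} {G : SimpleGraph V} {M : Finset (Sym2 V)}

theorem IsMatchingSet.eq_of_mem_of_mem (hM : IsMatchingSet G M) {e f : Sym2 V} (he : e ∈ M)
    (hf : f ∈ M) {v : V} (hve : v ∈ e) (hvf : v ∈ f) : e = f := by
  by_contra hne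
  exact hM.2 he hf hne v ⟨hve, hvf⟩

theorem isMaximalMatching_iff :
    IsMaximalMatching G M ↔
      IsMatchingSet G M ∧ ∀ e ∈ G.edgeSet, ∃ f ∈ M, ∃ v, v ∈ e ∧ v ∈ f := by
  refine ⟨fun hM => ⟨hM.1, fun e he => ?_⟩, fun ⟨hM, hmeet⟩ => ⟨hM, fun N hN hMN => ?_⟩⟩
  · by_contra! hfree
    have hinsert : IsMatchingSet G (insert e M) := by
      refine ⟨?_, ?_⟩
      · rw [Finset.coe_insert]
        exact Set.insert_subset he hM.1.1
      · rw [Finset.coe_insert, Set.pairwise_insert]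
        exact ⟨hM.1.2, fun f hf _ => ⟨fun v hv => hfree f hf v hv.1 hv.2,
          fun v hv => hfree f hf v hv.2 hv.1⟩⟩
    have heM : e ∈ M := hM.2 _ hinsert (Finset.subset_insert e M) ▸ Finset.mem_insert_self e M
    induction e using Sym2.ind with
    | _ x y => exact hfree _ heM x (Sym2.mem_mk_left x y) (Sym2.mem_mk_left x y)
  · refine Finset.Subset.antisymm (fun e he => ?_) hMN
    obtain ⟨f, hf, v, hve, hvf⟩ := hmeet e (hN.1 he)
    exact hN.eq_of_mem_of_mem he (hMN hf) hve hvf ▸ hf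

theorem mem_maximalMatchings [Fintype V] [DecidableEq V] :
    M ∈ maximalMatchings G ↔ IsMaximalMatching G M := by
  rw [maximalMatchings, Finset.mem_filter, Finset.mem_powerset, and_iff_right_iff_imp]
  exact fun hM e he => SimpleGraph.mem_edgeFinset.mpr (hM.1.1 he)

theorem avm_eq_of_card_eq_two_or_three [Fintype V] [DecidableEq V]
    (h : ∀ M ∈ maximalMatchings G, M.card = 2 ∨ M.card = 3) :
    avm G = (2 * ((maximalMatchings G).filter fun M => M.card = 2).card +
        3 * ((maximalMatchings G).filter fun M => M.card = 3).card) /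
      (((maximalMatchings G).filter fun M => M.card = 2).card +
        ((maximalMatchings G).filter fun M => M.card = 3).card : ℚ) := by
  have hnot : ((maximalMatchings G).filter fun M => ¬M.card = 2) =
      (maximalMatchings G).filter fun M => M.card = 3 :=
    Finset.filter_congr fun M hM => by rcases h M hM with h | h <;> simp [h]
  have hconst (c : ℕ) : ∑ M ∈ (maximalMatchings G).filter (·.card = c), (M.card : ℚ) =
      c * ((maximalMatchings G).filter (·.card = c)).card := by
    rw [Finset.sum_congr rfl fun M hM => congrArg Nat.cast (Finset.mem_filter.mp hM).2,
      Finset.sum_const, nsmul_eq_mul, mul_comm]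
  have hsum := Finset.sum_filter_add_sum_filter_not (maximalMatchings G) (·.card = 2)
    fun M => (M.card : ℚ)
  have hcard := Finset.card_filter_add_card_filter_not (s := maximalMatchings G) (·.card = 2)
  rw [hnot, hconst, hconst] at hsum
  rw [hnot] at hcard
  rw [avm, ← hsum, ← hcard]
  push_cast
  ring

end Matching

namespace T33

variable {k : ℕ}

theorem adj_two_iff {x : Fin (k + 7)} :
    (T33 (k + 7)).Adj 2 x ↔ (x : ℕ) = 0 ∨ (x : ℕ) = 1 ∨ (x : ℕ) = 3 ∨ 6 ≤ (x : ℕ) := by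
  simp (disch := omega) only [T33, SimpleGraph.fromRel_adj, ne_eq, Fin.ext_iff,
    Fin.coe_ofNat_eq_mod, Nat.mod_eq_of_lt, true_and, and_true]
  omega

theorem s01_mem_edgeSet : s(0, 1) ∈ (T33 (k + 7)).edgeSet := by
  simp (disch := omega) only [SimpleGraph.mem_edgeSet, T33, SimpleGraph.fromRel_adj, ne_eq,
    Fin.ext_iff, Fin.coe_ofNat_eq_mod, Nat.mod_eq_of_lt]
  decide

def triangleEdges : Finset (Sym2 (Fin (k + 7))) := {s(3, 4), s(3, 5), s(4, 5)}

theorem triangleEdges_subset_edgeSet :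
    ((triangleEdges : Finset (Sym2 (Fin (k + 7)))) : Set (Sym2 (Fin (k + 7)))) ⊆
      (T33 (k + 7)).edgeSet := by
  intro t ht
  simp only [triangleEdges, Finset.coe_insert, Finset.coe_singleton, Set.mem_insert_iff,
    Set.mem_singleton_iff] at ht
  rcases ht with rfl | rfl | rfl <;>
  · simp (disch := omega) only [SimpleGraph.mem_edgeSet, T33, SimpleGraph.fromRel_adj, ne_eq,
      Fin.ext_iff, Fin.coe_ofNat_eq_mod, Nat.mod_eq_of_lt]
    decide

theorem card_triangleEdges : (triangleEdges : Finset (Sym2 (Fin (k + 7)))).card = 3 := by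
  rw [triangleEdges, Finset.card_insert_of_notMem, Finset.card_pair]
  all_goals
    simp (disch := omega) only [Finset.mem_insert, Finset.mem_singleton, ne_eq, Sym2.eq_iff,
      Fin.ext_iff, Fin.coe_ofNat_eq_mod, Nat.mod_eq_of_lt]
    omega

variable {x : Fin (k + 7)} {t : Sym2 (Fin (k + 7))}

theorem notMem_of_mem_triangleEdges (ht : t ∈ triangleEdges) {v : Fin (k + 7)}
    (hv : (v : ℕ) < 3 ∨ 5 < (v : ℕ)) : v ∉ t := by
  simp only [triangleEdges, Finset.mem_insert, Finset.mem_singleton] at ht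
  rcases ht with rfl | rfl | rfl <;>
  · simp (disch := omega) only [Sym2.mem_iff, Fin.ext_iff, Fin.coe_ofNat_eq_mod,
      Nat.mod_eq_of_lt]
    omega

theorem two_notMem_of_mem_triangleEdges (ht : t ∈ triangleEdges) : (2 : Fin (k + 7)) ∉ t :=
  notMem_of_mem_triangleEdges ht (.inl ((Nat.mod_le _ _).trans_lt (by norm_num)))

theorem exists_mem_mem_of_mem_triangleEdges {t' : Sym2 (Fin (k + 7))}
    (ht : t ∈ triangleEdges) (ht' : t' ∈ triangleEdges) : ∃ v, v ∈ t ∧ v ∈ t' := by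
  simp only [triangleEdges, Finset.mem_insert, Finset.mem_singleton] at ht ht'
  rcases ht with rfl | rfl | rfl <;> rcases ht' with rfl | rfl | rfl <;> simp

theorem edge_cases {e : Sym2 (Fin (k + 7))} (he : e ∈ (T33 (k + 7)).edgeSet) :
    (∃ x, (T33 (k + 7)).Adj 2 x ∧ e = s(2, x)) ∨ e ∈ triangleEdges ∨ e = s(0, 1) := by
  induction e using Sym2.ind with
  | _ x y =>
    rw [SimpleGraph.mem_edgeSet] at he
    by_cases hx : x = 2
    · exact .inl ⟨y, hx ▸ he, hx ▸ rfl⟩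
    by_cases hy : y = 2
    · exact .inl ⟨x, hy ▸ he.symm, hy ▸ Sym2.eq_swap⟩
    right
    simp (disch := omega) only [T33, SimpleGraph.fromRel_adj, triangleEdges, Finset.mem_insert,
      Finset.mem_singleton, Sym2.eq_iff, ne_eq, Fin.ext_iff, Fin.coe_ofNat_eq_mod,
      Nat.mod_eq_of_lt] at he hx hy ⊢
    obtain ⟨-, h | h⟩ := he <;> rcases h with h | h | h | h | h | h | h | h <;> omega

def matchingOf (x : Fin (k + 7)) (t : Sym2 (Fin (k + 7))) : Finset (Sym2 (Fin (k + 7))) :=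
  if (x : ℕ) ≤ 1 then {s(2, x), t} else {s(2, x), s(0, 1), t}

theorem mem_matchingOf {e : Sym2 (Fin (k + 7))} :
    e ∈ matchingOf x t ↔ e = s(2, x) ∨ e = t ∨ (1 < (x : ℕ) ∧ e = s(0, 1)) := by
  unfold matchingOf
  split_ifs with hx
  · have : ¬1 < (x : ℕ) := by omega
    simp only [Finset.mem_insert, Finset.mem_singleton]
    tauto
  · have : 1 < (x : ℕ) := by omega
    simp only [Finset.mem_insert, Finset.mem_singleton]
    tauto

theorem isMatchingSet_matchingOf (hx : (T33 (k + 7)).Adj 2 x) (ht : t ∈ triangleEdges)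
    (hxt : x ∉ t) : IsMatchingSet (T33 (k + 7)) (matchingOf x t) := by
  have hspoke_t : ∀ v ∈ s(2, x), v ∉ t := by
    intro v hv
    rcases Sym2.mem_iff.1 hv with rfl | rfl
    exacts [two_notMem_of_mem_triangleEdges ht, hxt]
  have hspoke_01 : 1 < (x : ℕ) → ∀ v ∈ s(2, x), v ∉ s(0, 1) := by
    intro h1 v hv hv01
    simp (disch := omega) only [Sym2.mem_iff, Fin.ext_iff, Fin.coe_ofNat_eq_mod,
      Nat.mod_eq_of_lt] at hv hv01
    omega
  have ht_01 : ∀ v ∈ t, v ∉ s(0, 1) := by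
    intro v hv hv01
    refine notMem_of_mem_triangleEdges ht (.inl ?_) hv
    simp (disch := omega) only [Sym2.mem_iff, Fin.ext_iff, Fin.coe_ofNat_eq_mod,
      Nat.mod_eq_of_lt] at hv01
    omega
  refine ⟨fun e he => ?_, fun a ha b hb hab v ⟨hva, hvb⟩ => ?_⟩
  · rcases mem_matchingOf.1 he with rfl | rfl | ⟨-, rfl⟩
    exacts [hx, triangleEdges_subset_edgeSet ht, s01_mem_edgeSet]
  · rcases mem_matchingOf.1 ha with rfl | rfl | ⟨h1, rfl⟩ <;>
      rcases mem_matchingOf.1 hb with rfl | rfl | ⟨h1, rfl⟩ <;>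
      first
        | exact hab rfl
        | exact hspoke_t v hva hvb
        | exact hspoke_t v hvb hva
        | exact hspoke_01 h1 v hva hvb
        | exact hspoke_01 h1 v hvb hva
        | exact ht_01 v hva hvb
        | exact ht_01 v hvb hva

theorem isMaximalMatching_matchingOf (hx : (T33 (k + 7)).Adj 2 x) (ht : t ∈ triangleEdges)
    (hxt : x ∉ t) : IsMaximalMatching (T33 (k + 7)) (matchingOf x t) := by
  refine isMaximalMatching_iff.2 ⟨isMatchingSet_matchingOf hx ht hxt, fun e he => ?_⟩
  rcases edge_cases he with ⟨y, -, rfl⟩ | he | rfl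
  · exact ⟨s(2, x), mem_matchingOf.2 (.inl rfl), 2, Sym2.mem_mk_left _ _, Sym2.mem_mk_left _ _⟩
  · obtain ⟨v, hv, hvt⟩ := exists_mem_mem_of_mem_triangleEdges he ht
    exact ⟨t, mem_matchingOf.2 (.inr (.inl rfl)), v, hv, hvt⟩
  · by_cases h1 : (x : ℕ) ≤ 1
    · refine ⟨s(2, x), mem_matchingOf.2 (.inl rfl), x, ?_, Sym2.mem_mk_right _ _⟩
      simp (disch := omega) only [Sym2.mem_iff, Fin.ext_iff, Fin.coe_ofNat_eq_mod,
        Nat.mod_eq_of_lt]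
      omega
    · exact ⟨s(0, 1), mem_matchingOf.2 (.inr (.inr ⟨by omega, rfl⟩)), 0,
        Sym2.mem_mk_left _ _, Sym2.mem_mk_left _ _⟩

theorem card_matchingOf (ht : t ∈ triangleEdges) :
    (matchingOf x t).card = if (x : ℕ) ≤ 1 then 2 else 3 := by
  have h2t := two_notMem_of_mem_triangleEdges ht
  have h0t : (0 : Fin (k + 7)) ∉ t :=
    notMem_of_mem_triangleEdges ht (.inl ((Nat.mod_le _ _).trans_lt (by norm_num)))
  have h201 : (2 : Fin (k + 7)) ∉ s(0, 1) := by
    simp (disch := omega) only [Sym2.mem_iff, Fin.ext_iff, Fin.coe_ofNat_eq_mod,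
      Nat.mod_eq_of_lt]
    omega
  unfold matchingOf
  split_ifs
  · exact Finset.card_pair (ne_of_mem_of_not_mem' (Sym2.mem_mk_left _ _) h2t)
  · rw [Finset.card_insert_of_notMem, Finset.card_pair
      (ne_of_mem_of_not_mem' (Sym2.mem_mk_left _ _) h0t)]
    simp only [Finset.mem_insert, Finset.mem_singleton, not_or]
    exact ⟨ne_of_mem_of_not_mem' (Sym2.mem_mk_left _ _) h201,
      ne_of_mem_of_not_mem' (Sym2.mem_mk_left _ _) h2t⟩

variable {M : Finset (Sym2 (Fin (k + 7)))}

theorem exists_adj_two_mem (hM : IsMaximalMatching (T33 (k + 7)) M) :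
    ∃ x, (T33 (k + 7)).Adj 2 x ∧ s(2, x) ∈ M := by
  have hleaf : s(2, 6) ∈ (T33 (k + 7)).edgeSet := by
    rw [SimpleGraph.mem_edgeSet, adj_two_iff]
    simp (disch := omega) only [Fin.coe_ofNat_eq_mod, Nat.mod_eq_of_lt]
    omega
  obtain ⟨f, hf, v, hv, hvf⟩ := (isMaximalMatching_iff.1 hM).2 _ hleaf
  simp (disch := omega) only [Sym2.mem_iff, Fin.ext_iff, Fin.coe_ofNat_eq_mod,
    Nat.mod_eq_of_lt] at hv
  rcases edge_cases (hM.1.1 hf) with ⟨x, hx, rfl⟩ | hft | rfl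
  · exact ⟨x, hx, hf⟩
  · exact absurd hvf (notMem_of_mem_triangleEdges hft (by omega))
  · simp (disch := omega) only [Sym2.mem_iff, Fin.ext_iff, Fin.coe_ofNat_eq_mod,
      Nat.mod_eq_of_lt] at hvf
    omega

theorem exists_mem_triangleEdges_mem (hM : IsMaximalMatching (T33 (k + 7)) M) :
    ∃ t ∈ triangleEdges, t ∈ M := by
  have h45 : s(4, 5) ∈ (triangleEdges : Finset (Sym2 (Fin (k + 7)))) := by simp [triangleEdges]
  obtain ⟨f, hf, v, hv, hvf⟩ :=
    (isMaximalMatching_iff.1 hM).2 _ (triangleEdges_subset_edgeSet h45)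
  rcases edge_cases (hM.1.1 hf) with ⟨y, hy, rfl⟩ | hft | rfl
  · rw [adj_two_iff] at hy
    simp (disch := omega) only [Sym2.mem_iff, Fin.ext_iff, Fin.coe_ofNat_eq_mod,
      Nat.mod_eq_of_lt] at hv hvf
    omega
  · exact ⟨f, hft, hf⟩
  · simp (disch := omega) only [Sym2.mem_iff, Fin.ext_iff, Fin.coe_ofNat_eq_mod,
      Nat.mod_eq_of_lt] at hv hvf
    omega

theorem s01_mem_of_mem (hM : IsMaximalMatching (T33 (k + 7)) M) (hxM : s(2, x) ∈ M)
    (hx : 1 < (x : ℕ)) : s(0, 1) ∈ M := by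
  obtain ⟨f, hf, v, hv, hvf⟩ := (isMaximalMatching_iff.1 hM).2 _ s01_mem_edgeSet
  simp (disch := omega) only [Sym2.mem_iff, Fin.ext_iff, Fin.coe_ofNat_eq_mod,
    Nat.mod_eq_of_lt] at hv
  rcases edge_cases (hM.1.1 hf) with ⟨y, -, rfl⟩ | hft | rfl
  · rw [hM.1.eq_of_mem_of_mem hf hxM (Sym2.mem_mk_left _ _) (Sym2.mem_mk_left _ _)] at hvf
    simp (disch := omega) only [Sym2.mem_iff, Fin.ext_iff, Fin.coe_ofNat_eq_mod,
      Nat.mod_eq_of_lt] at hvf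
    omega
  · exact absurd hvf (notMem_of_mem_triangleEdges hft (by omega))
  · exact hf

theorem eq_matchingOf (hM : IsMaximalMatching (T33 (k + 7)) M) (hxM : s(2, x) ∈ M)
    (ht : t ∈ triangleEdges) (htM : t ∈ M) : M = matchingOf x t := by
  ext g
  rw [mem_matchingOf]
  refine ⟨fun hg => ?_, ?_⟩
  · rcases edge_cases (hM.1.1 hg) with ⟨y, -, rfl⟩ | hgt | rfl
    · exact .inl (hM.1.eq_of_mem_of_mem hg hxM (Sym2.mem_mk_left _ _) (Sym2.mem_mk_left _ _))
    · obtain ⟨v, hv, hvt⟩ := exists_mem_mem_of_mem_triangleEdges hgt ht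
      exact .inr (.inl (hM.1.eq_of_mem_of_mem hg htM hv hvt))
    · by_cases h1 : (x : ℕ) ≤ 1
      · refine .inl (hM.1.eq_of_mem_of_mem hg hxM (v := x) ?_ (Sym2.mem_mk_right _ _))
        simp (disch := omega) only [Sym2.mem_iff, Fin.ext_iff, Fin.coe_ofNat_eq_mod,
          Nat.mod_eq_of_lt]
        omega
      · exact .inr (.inr ⟨by omega, rfl⟩)
  · rintro (rfl | rfl | ⟨h1, rfl⟩)
    exacts [hxM, htM, s01_mem_of_mem hM hxM h1]

theorem exists_eq_matchingOf (hM : IsMaximalMatching (T33 (k + 7)) M) :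
    ∃ x t, (T33 (k + 7)).Adj 2 x ∧ t ∈ triangleEdges ∧ x ∉ t ∧ M = matchingOf x t := by
  obtain ⟨x, hx, hxM⟩ := exists_adj_two_mem hM
  obtain ⟨t, ht, htM⟩ := exists_mem_triangleEdges_mem hM
  refine ⟨x, t, hx, ht, fun hxt => ?_, eq_matchingOf hM hxM ht htM⟩
  have hxt_eq := hM.1.eq_of_mem_of_mem hxM htM (Sym2.mem_mk_right 2 x) hxt
  exact two_notMem_of_mem_triangleEdges ht (hxt_eq ▸ Sym2.mem_mk_left 2 x)

noncomputable def matchingIndex (k : ℕ) : Finset (Fin (k + 7) × Sym2 (Fin (k + 7))) :=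
  (Finset.univ ×ˢ triangleEdges).filter fun p => (T33 (k + 7)).Adj 2 p.1 ∧ p.1 ∉ p.2

theorem mem_matchingIndex {p : Fin (k + 7) × Sym2 (Fin (k + 7))} :
    p ∈ matchingIndex k ↔ (T33 (k + 7)).Adj 2 p.1 ∧ p.2 ∈ triangleEdges ∧ p.1 ∉ p.2 := by
  simp only [matchingIndex, Finset.mem_filter, Finset.mem_product, Finset.mem_univ, true_and]
  tauto

theorem maximalMatchings_eq_image :
    maximalMatchings (T33 (k + 7)) = (matchingIndex k).image fun p => matchingOf p.1 p.2 := by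
  ext M
  simp only [mem_maximalMatchings, Finset.mem_image, mem_matchingIndex, Prod.exists]
  constructor
  · intro hM
    obtain ⟨x, t, hx, ht, hxt, rfl⟩ := exists_eq_matchingOf hM
    exact ⟨x, t, ⟨hx, ht, hxt⟩, rfl⟩
  · rintro ⟨x, t, ⟨hx, ht, hxt⟩, rfl⟩
    exact isMaximalMatching_matchingOf hx ht hxt

/-- A matching has at most one edge at `v₃` and at most one edge in the triangle. -/
theorem injOn_matchingOf :
    Set.InjOn (fun p => matchingOf p.1 p.2)
      (matchingIndex k : Set (Fin (k + 7) × Sym2 (Fin (k + 7)))) := by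
  rintro ⟨x, t⟩ hp ⟨x', t'⟩ hp' heq
  rw [Finset.mem_coe, mem_matchingIndex] at hp hp'
  change matchingOf x t = matchingOf x' t' at heq
  have hM := isMatchingSet_matchingOf hp'.1 hp'.2.1 hp'.2.2
  have hxM : s(2, x) ∈ matchingOf x' t' := heq ▸ mem_matchingOf.2 (.inl rfl)
  have htM : t ∈ matchingOf x' t' := heq ▸ mem_matchingOf.2 (.inr (.inl rfl))
  obtain ⟨v, hv, hv'⟩ := exists_mem_mem_of_mem_triangleEdges hp.2.1 hp'.2.1
  rw [Prod.mk.injEq, ← Sym2.congr_right (a := 2)]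
  exact ⟨hM.eq_of_mem_of_mem hxM (mem_matchingOf.2 (.inl rfl)) (Sym2.mem_mk_left _ _)
      (Sym2.mem_mk_left _ _),
    hM.eq_of_mem_of_mem htM (mem_matchingOf.2 (.inr (.inl rfl))) hv hv'⟩

theorem card_filter_maximalMatchings (c : ℕ) :
    ((maximalMatchings (T33 (k + 7))).filter (·.card = c)).card =
      ((matchingIndex k).filter fun p => (if (p.1 : ℕ) ≤ 1 then 2 else 3) = c).card := by
  rw [maximalMatchings_eq_image, Finset.filter_image,
    Finset.card_image_of_injOn ((injOn_matchingOf (k := k)).mono (Finset.filter_subset _ _))]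
  exact congrArg Finset.card (Finset.filter_congr fun p hp => by
    rw [card_matchingOf (mem_matchingIndex.1 hp).2.1])

theorem filter_le_one_matchingIndex :
    (matchingIndex k).filter (fun p => (p.1 : ℕ) ≤ 1) =
      ({0, 1} : Finset (Fin (k + 7))) ×ˢ triangleEdges := by
  ext ⟨x, t⟩
  simp (disch := omega) only [Finset.mem_filter, mem_matchingIndex, Finset.mem_product,
    Finset.mem_insert, Finset.mem_singleton, adj_two_iff, Fin.ext_iff, Fin.coe_ofNat_eq_mod,
    Nat.mod_eq_of_lt]
  constructor
  · rintro ⟨⟨-, ht, -⟩, hx⟩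
    exact ⟨by omega, ht⟩
  · rintro ⟨hx, ht⟩
    exact ⟨⟨by omega, ht, notMem_of_mem_triangleEdges ht (by omega)⟩, by omega⟩

theorem filter_one_lt_matchingIndex :
    (matchingIndex k).filter (fun p => 1 < (p.1 : ℕ)) = insert (3, s(4, 5))
      ((Finset.univ.filter fun x : Fin (k + 7) => 6 ≤ (x : ℕ)) ×ˢ triangleEdges) := by
  ext ⟨x, t⟩
  simp only [Finset.mem_filter, mem_matchingIndex, Finset.mem_product, Finset.mem_insert,
    Finset.mem_univ, true_and, Prod.mk.injEq, adj_two_iff]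
  constructor
  · rintro ⟨⟨hx, ht, hxt⟩, hx1⟩
    by_cases hx3 : (x : ℕ) = 3
    · obtain rfl : x = 3 :=
        Fin.ext (by rw [hx3, Fin.coe_ofNat_eq_mod, Nat.mod_eq_of_lt (by omega)])
      simp only [triangleEdges, Finset.mem_insert, Finset.mem_singleton] at ht
      rcases ht with rfl | rfl | rfl
      · exact absurd (Sym2.mem_mk_left _ _) hxt
      · exact absurd (Sym2.mem_mk_left _ _) hxt
      · exact .inl ⟨rfl, rfl⟩
    · exact .inr ⟨by omega, ht⟩
  · rintro (⟨rfl, rfl⟩ | ⟨hx, ht⟩)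
    · simp (disch := omega) only [triangleEdges, Finset.mem_insert, Finset.mem_singleton,
        Sym2.mem_iff, Fin.ext_iff, Fin.coe_ofNat_eq_mod, Nat.mod_eq_of_lt, or_true]
      decide
    · exact ⟨⟨by omega, ht, notMem_of_mem_triangleEdges ht (by omega)⟩, by omega⟩

theorem card_leaves : (Finset.univ.filter fun x : Fin (k + 7) => 6 ≤ (x : ℕ)).card = k + 1 := by
  have h := Finset.card_filter_add_card_filter_not (s := Finset.univ) fun x : Fin (k + 7) =>
    (x : ℕ) < 6
  simp only [Fin.card_filter_val_lt, not_lt, Finset.card_univ, Fintype.card_fin] at h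
  omega

theorem card_filter_card_eq_two :
    ((maximalMatchings (T33 (k + 7))).filter (·.card = 2)).card = 6 := by
  rw [card_filter_maximalMatchings]
  simp only [ite_eq_left_iff, not_le, Nat.succ_ne_self, imp_false, not_lt]
  rw [filter_le_one_matchingIndex, Finset.card_product, card_triangleEdges, Finset.card_pair]
  simp (disch := omega) only [ne_eq, Fin.ext_iff, Fin.coe_ofNat_eq_mod, Nat.mod_eq_of_lt]
  omega

theorem card_filter_card_eq_three :
    ((maximalMatchings (T33 (k + 7))).filter (·.card = 3)).card = 3 * (k + 1) + 1 := by
  rw [card_filter_maximalMatchings]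
  simp only [ite_eq_right_iff, Nat.reduceEqDiff, imp_false, not_le]
  rw [filter_one_lt_matchingIndex, Finset.card_insert_of_notMem, Finset.card_product,
    card_triangleEdges, card_leaves]
  · ring
  · simp (disch := omega) only [Finset.mem_product, Finset.mem_filter, Fin.coe_ofNat_eq_mod,
      Nat.mod_eq_of_lt]
    omega

theorem card_eq_two_or_three :
    ∀ M ∈ maximalMatchings (T33 (k + 7)), M.card = 2 ∨ M.card = 3 := by
  intro M hM
  rw [maximalMatchings_eq_image] at hM
  obtain ⟨⟨x, t⟩, hp, rfl⟩ := Finset.mem_image.1 hM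
  rw [card_matchingOf (mem_matchingIndex.1 hp).2.1]
  split_ifs <;> simp

end T33

theorem stmt12 (n : ℕ) (hn : 7 ≤ n) :
    ((maximalMatchings (T33 n)).filter fun M => M.card = 2).card = 6 ∧
    ((maximalMatchings (T33 n)).filter fun M => M.card = 3).card = 3 * (n - 6) + 1 ∧
    (∀ M ∈ maximalMatchings (T33 n), M.card = 2 ∨ M.card = 3) ∧
    avm (T33 n) = (9 * (n : ℚ) - 39) / (3 * (n : ℚ) - 11) ∧
    avm (T33 n) = 3 - 6 / (3 * (n : ℚ) - 11) := by
  obtain ⟨k, rfl⟩ := Nat.exists_eq_add_of_le' hn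
  have htwo := T33.card_filter_card_eq_two (k := k)
  have hthree := T33.card_filter_card_eq_three (k := k)
  have hcard := T33.card_eq_two_or_three (k := k)
  have havm := avm_eq_of_card_eq_two_or_three hcard
  have hnum :
      2 * ((6 : ℕ) : ℚ) + 3 * ((3 * (k + 1) + 1 : ℕ) : ℚ) = 9 * ((k + 7 : ℕ) : ℚ) - 39 := by
    push_cast
    ring
  have hden : ((6 : ℕ) : ℚ) + ((3 * (k + 1) + 1 : ℕ) : ℚ) = 3 * ((k + 7 : ℕ) : ℚ) - 11 := by
    push_cast
    ring
  rw [htwo, hthree, hnum, hden] at havm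
  have hden_ne : 3 * ((k + 7 : ℕ) : ℚ) - 11 ≠ 0 := by
    push_cast
    linarith [(k.cast_nonneg : (0 : ℚ) ≤ k)]
  refine ⟨htwo, by rw [hthree]; omega, hcard, havm, ?_⟩
  rw [havm, eq_sub_iff_add_eq, ← add_div, div_eq_iff hden_ne]
  ring
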